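/- Let p > 0, λ > 0, and define α(p,λ) = 2∫_0^∞ e^{-λ t^p - t^2} dt. Then λ ↦ α(p,λ) is nonincreasing and λ ↦ λ α(p,λ)^p is nondecreasing on (0,∞). -/

import Mathlib

/-!
Both claims follow from the fact that `∫₀^∞ exp (-a tᵖ - b t²) dt` decreases in each of
`a` and `b`. For the second, the substitution `t = λ^{1/p} s` gives
`λ α(p, λ)ᵖ = (2 ∫₀^∞ exp (-sᵖ - λ^{-2/p} s²) ds)ᵖ`,
whose Gaussian coefficient decreases in `λ`.
-/

open MeasureTheory

/-- α(p, λ) = 2 ∫_0^∞ e^{-λ tᵖ - t²} dt. -/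
noncomputable def alphaF (p lam : ℝ) : ℝ :=
  2 * ∫ t in Set.Ioi (0 : ℝ), Real.exp (-lam * t ^ p - t ^ 2)

open Set Real

noncomputable def powGaussIntegral (p a b : ℝ) : ℝ :=
  ∫ t in Ioi (0 : ℝ), exp (-a * t ^ p - b * t ^ 2)

theorem integrableOn_exp_neg_mul_rpow_sub_mul_sq (p : ℝ) {a b : ℝ} (ha : 0 ≤ a) (hb : 0 < b) :
    IntegrableOn (fun t : ℝ => exp (-a * t ^ p - b * t ^ 2)) (Ioi 0) := by
  refine ((integrable_exp_neg_mul_sq hb).restrict (s := Ioi 0)).mono' (by fun_prop) ?_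
  filter_upwards [ae_restrict_mem measurableSet_Ioi] with t ht
  rw [norm_of_nonneg (exp_pos _).le, exp_le_exp]
  nlinarith [mul_nonneg ha (rpow_nonneg (le_of_lt ht) p)]

theorem powGaussIntegral_le_powGaussIntegral (p : ℝ) {a a' b b' : ℝ} (ha : 0 ≤ a) (hb : 0 < b)
    (haa' : a ≤ a') (hbb' : b ≤ b') : powGaussIntegral p a' b' ≤ powGaussIntegral p a b := by
  refine setIntegral_mono_on
    (integrableOn_exp_neg_mul_rpow_sub_mul_sq p (ha.trans haa') (hb.trans_le hbb'))
    (integrableOn_exp_neg_mul_rpow_sub_mul_sq p ha hb) measurableSet_Ioi fun t ht => ?_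
  rw [exp_le_exp]
  nlinarith [rpow_nonneg (le_of_lt ht) p, sq_nonneg t]

theorem powGaussIntegral_nonneg (p a b : ℝ) : 0 ≤ powGaussIntegral p a b :=
  setIntegral_nonneg measurableSet_Ioi fun _ _ => (exp_pos _).le

theorem powGaussIntegral_scale (p a b : ℝ) {c : ℝ} (hc : 0 < c) :
    powGaussIntegral p (c ^ p * a) (c ^ 2 * b) = c⁻¹ * powGaussIntegral p a b := by
  have := integral_comp_mul_left_Ioi (fun t => exp (-a * t ^ p - b * t ^ 2)) 0 hc
  rw [mul_zero, smul_eq_mul] at this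
  rw [powGaussIntegral, powGaussIntegral, ← this]
  refine setIntegral_congr_fun measurableSet_Ioi fun t ht => ?_
  simp only [mul_rpow hc.le (le_of_lt ht)]
  ring_nf

theorem alphaF_eq (p lam : ℝ) : alphaF p lam = 2 * powGaussIntegral p lam 1 := by
  simp [alphaF, powGaussIntegral]

theorem mul_alphaF_rpow_eq {p lam : ℝ} (hp : 0 < p) (hlam : 0 < lam) :
    lam * alphaF p lam ^ p = (2 * powGaussIntegral p 1 ((lam ^ p⁻¹) ^ 2)⁻¹) ^ p := by
  set c := lam ^ p⁻¹
  have hc : 0 < c := rpow_pos_of_pos hlam _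
  have hcp : c ^ p = lam := by
    rw [← rpow_mul hlam.le, inv_mul_cancel₀ hp.ne', rpow_one]
  have hscale := powGaussIntegral_scale p 1 (c ^ 2)⁻¹ hc
  rw [mul_one, hcp, mul_inv_cancel₀ (by positivity)] at hscale
  rw [alphaF_eq, hscale, mul_left_comm, mul_rpow (inv_nonneg.2 hc.le) (by
    positivity [powGaussIntegral_nonneg p 1 (c ^ 2)⁻¹]), inv_rpow hc.le, hcp, ← mul_assoc,
    mul_inv_cancel₀ hlam.ne', one_mul]

theorem antitoneOn_alphaF (p : ℝ) : AntitoneOn (alphaF p) (Ioi 0) := by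
  intro a (ha : 0 < a) b _ hab
  rw [alphaF_eq, alphaF_eq]
  gcongr 2 * ?_
  exact powGaussIntegral_le_powGaussIntegral p ha.le one_pos hab le_rfl

theorem monotoneOn_mul_alphaF_rpow {p : ℝ} (hp : 0 < p) :
    MonotoneOn (fun lam => lam * alphaF p lam ^ p) (Ioi 0) := by
  intro a (ha : 0 < a) b (hb : 0 < b) hab
  simp only [mul_alphaF_rpow_eq hp ha, mul_alphaF_rpow_eq hp hb]
  have hpow : (a ^ p⁻¹) ^ 2 ≤ (b ^ p⁻¹) ^ 2 := by gcongr
  gcongr (2 * ?_) ^ p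
  · positivity [powGaussIntegral_nonneg p 1 ((a ^ p⁻¹) ^ 2)⁻¹]
  · exact powGaussIntegral_le_powGaussIntegral p zero_le_one (by positivity) le_rfl
      (inv_anti₀ (by positivity) hpow)

theorem stmt16 (p : ℝ) (hp : 0 < p) :
    AntitoneOn (fun lam => alphaF p lam) (Set.Ioi 0) ∧
    MonotoneOn (fun lam => lam * alphaF p lam ^ p) (Set.Ioi 0) :=
  ⟨antitoneOn_alphaF p, monotoneOn_mul_alphaF_rpow hp⟩
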